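/- arXiv:1502.05306 — 2 statements merged into one kernel-verified Lean document; each statement's English description precedes it below -/
import Mathlib

section
/- For odd d ≥ 3, the rational map φ_d(z) = i((z-1)/(z+1))^d satisfies τ ∘ φ_d = φ_d ∘ τ, where τ(z) = -1/conj(z). -/
open OnePoint Complex Polynomial

/-- The Möbius transformation determined by the matrix `[[a,b],[c,d]]`,
acting on the Riemann sphere `OnePoint ℂ`. -/
noncomputable def moeb (a b c d : ℂ) (p : OnePoint ℂ) : OnePoint ℂ :=
  OnePoint.elim p (if c = 0 then ∞ else ((a / c : ℂ) : OnePoint ℂ))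
    (fun z => if c * z + d = 0 then ∞ else (((a * z + b) / (c * z + d) : ℂ) : OnePoint ℂ))

/-- Complex conjugation extended to the Riemann sphere. -/
noncomputable def sphConj (p : OnePoint ℂ) : OnePoint ℂ :=
  OnePoint.elim p ∞ (fun z => ((starRingEnd ℂ) z : OnePoint ℂ))

/-- The imaginary reflection `τ(z) = -1/conj z` on the Riemann sphere. -/
noncomputable def tauSph (p : OnePoint ℂ) : OnePoint ℂ :=
  moeb 0 (-1) 1 0 (sphConj p)

/-- The rational map on the Riemann sphere determined by a quotient `P/Q`
of (coprime) polynomials. -/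
noncomputable def ratMap (P Q : Polynomial ℂ) (p : OnePoint ℂ) : OnePoint ℂ :=
  OnePoint.elim p
    (if Q.degree < P.degree then ∞
     else ((P.coeff Q.natDegree / Q.leadingCoeff : ℂ) : OnePoint ℂ))
    (fun z => if Q.eval z = 0 then ∞ else ((P.eval z / Q.eval z : ℂ) : OnePoint ℂ))

/-! `φ_d` factors as the rotation `w ↦ i w`, after the power map `w ↦ w ^ d`, after the Cayley
transform `z ↦ (z - 1) / (z + 1)`, and each factor commutes with `τ`: the Cayley matrix has the
shape `[[a, b], [-conj b, conj a]]`, a rotation by a unit `u` satisfies `conj u = u⁻¹`, and the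
power map because `(-1) ^ d = -1` for odd `d`. -/

open ComplexConjugate

lemma tauSph_infty : tauSph ∞ = ((0 : ℂ) : OnePoint ℂ) := by
  simp [tauSph, sphConj, moeb]

lemma tauSph_zero : tauSph ((0 : ℂ) : OnePoint ℂ) = ∞ := by
  simp [tauSph, sphConj, moeb]

lemma tauSph_coe {z : ℂ} (hz : z ≠ 0) :
    tauSph (z : OnePoint ℂ) = ((-1 / conj z : ℂ) : OnePoint ℂ) := by
  simp [tauSph, sphConj, moeb, hz]

lemma tauSph_map_pow {n : ℕ} (hn : Odd n) (p : OnePoint ℂ) :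
    tauSph (p.map (· ^ n)) = (tauSph p).map (· ^ n) := by
  have hn0 : n ≠ 0 := hn.pos.ne'
  induction p using OnePoint.rec with
  | infty => simp [tauSph_infty, hn0]
  | coe z =>
    rcases eq_or_ne z 0 with rfl | hz
    · simp [tauSph_zero, hn0]
    · rw [OnePoint.map_some, tauSph_coe hz, tauSph_coe (pow_ne_zero n hz), OnePoint.map_some,
        div_pow, hn.neg_one_pow, map_pow]

lemma tauSph_moeb_mul {u : ℂ} (hu : ‖u‖ = 1) (p : OnePoint ℂ) :
    tauSph (moeb u 0 0 1 p) = moeb u 0 0 1 (tauSph p) := by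
  have hu0 : u ≠ 0 := norm_ne_zero_iff.mp (hu ▸ one_ne_zero)
  induction p using OnePoint.rec with
  | infty => simp [moeb, tauSph_infty]
  | coe z =>
    rcases eq_or_ne z 0 with rfl | hz
    · simp [moeb, tauSph_zero]
    · simp only [moeb, OnePoint.elim_some, zero_mul, zero_add, one_ne_zero, if_false, add_zero,
        div_one]
      rw [tauSph_coe hz, tauSph_coe (mul_ne_zero hu0 hz), map_mul, ← Complex.inv_eq_conj hu]
      congr 1
      field_simp

lemma moeb_cayley_coe {z : ℂ} (hz : z + 1 ≠ 0) :
    moeb 1 (-1) 1 1 (z : OnePoint ℂ) = (((z - 1) / (z + 1) : ℂ) : OnePoint ℂ) := by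
  simp [moeb, hz, sub_eq_add_neg]

lemma tauSph_moeb_cayley (p : OnePoint ℂ) :
    tauSph (moeb 1 (-1) 1 1 p) = moeb 1 (-1) 1 1 (tauSph p) := by
  induction p using OnePoint.rec with
  | infty => simp [moeb, tauSph_infty, tauSph_coe]
  | coe z =>
    rcases eq_or_ne z 0 with rfl | hz
    · simp [moeb, tauSph_zero, tauSph_coe]
    rcases eq_or_ne z (-1) with rfl | hz₁
    · simp [moeb, tauSph_infty, tauSph_coe]
    rcases eq_or_ne z 1 with rfl | hz₂
    · simp [moeb, tauSph_zero, tauSph_coe]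
    have hc : conj z ≠ 0 := by simpa using hz
    have hc₂ : conj z - 1 ≠ 0 :=
      sub_ne_zero.mpr ((map_ne_one_iff _ (RingHom.injective _)).mpr hz₂)
    have hz₁' : z + 1 ≠ 0 := by rwa [Ne, add_eq_zero_iff_eq_neg]
    have hz₂' : z - 1 ≠ 0 := sub_ne_zero.mpr hz₂
    have hτ : -1 / conj z + 1 ≠ 0 := by
      rw [div_add_one hc]; exact div_ne_zero (by rwa [neg_add_eq_sub]) hc
    rw [moeb_cayley_coe hz₁', tauSph_coe (div_ne_zero hz₂' hz₁'), tauSph_coe hz,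
      moeb_cayley_coe hτ, OnePoint.coe_eq_coe, map_div₀, map_sub, map_add, map_one,
      div_add_one hc, div_sub_one hc, div_div_div_cancel_right₀ hc, neg_div, one_div_div,
      neg_add_eq_sub]
    ring

lemma ratMap_infty_of_degree_eq {P Q : ℂ[X]} (h : P.degree = Q.degree) :
    ratMap P Q ∞ = ((P.leadingCoeff / Q.leadingCoeff : ℂ) : OnePoint ℂ) := by
  rw [ratMap, OnePoint.elim_infty, if_neg h.not_gt, ← natDegree_eq_natDegree h, coeff_natDegree]

lemma ratMap_eq_moeb_map_pow_moeb_cayley {d : ℕ} (hd : d ≠ 0) (p : OnePoint ℂ) :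
    ratMap (C I * (X - 1) ^ d) ((X + 1) ^ d) p =
      moeb I 0 0 1 ((moeb 1 (-1) 1 1 p).map (· ^ d)) := by
  induction p using OnePoint.rec with
  | infty =>
    have hdeg : (C I * (X - 1) ^ d).degree = ((X + 1) ^ d : ℂ[X]).degree := by
      rw [degree_C_mul I_ne_zero, degree_pow, degree_pow, ← C_1, degree_X_sub_C,
        degree_X_add_C]
    rw [ratMap_infty_of_degree_eq hdeg, leadingCoeff_mul, leadingCoeff_C, leadingCoeff_pow, leadingCoeff_pow, ← C_1,
      leadingCoeff_X_sub_C, leadingCoeff_X_add_C]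
    simp [moeb]
  | coe z =>
    rcases eq_or_ne (z + 1) 0 with hz | hz
    · simp [ratMap, moeb, hz, hd]
    · rw [moeb_cayley_coe hz]
      simp [ratMap, moeb, hz, div_pow, mul_div_assoc]

theorem silverman_commutes_with_tau_general (d : ℕ) (hodd : Odd d) :
    ∀ p, tauSph (ratMap (C Complex.I * (X - 1) ^ d) ((X + 1) ^ d) p)
        = ratMap (C Complex.I * (X - 1) ^ d) ((X + 1) ^ d) (tauSph p) := by
  intro p
  have hd : d ≠ 0 := hodd.pos.ne'
  rw [ratMap_eq_moeb_map_pow_moeb_cayley hd, ratMap_eq_moeb_map_pow_moeb_cayley hd,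
    tauSph_moeb_mul norm_I, tauSph_map_pow hodd, tauSph_moeb_cayley]

/-- for odd `d ≥ 3`, Silverman's map `φ_d(z) = i((z-1)/(z+1))^d`
commutes with the imaginary reflection `τ(z) = -1/conj z`. -/
theorem silverman_commutes_with_tau (d : ℕ) (hd : 3 ≤ d) (hodd : Odd d) :
    ∀ p, tauSph (ratMap (C Complex.I * (X - 1) ^ d) ((X + 1) ^ d) p)
        = ratMap (C Complex.I * (X - 1) ^ d) ((X + 1) ^ d) (tauSph p) :=
  silverman_commutes_with_tau_general d hodd
end

section
/- Let φ be a rational map of degree d ≥ 2 that commutes with the rotation T(z) = e^{2πi/n} z for some n ≥ 2. Then there exists a rational map ψ such that φ(z) = z·ψ(z^n). -/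
open OnePoint Complex Polynomial

/-!
Commuting with `z ↦ ωz` says `ω P(z)/Q(z) = P(ωz)/Q(ωz)`. As `P, Q` are coprime and the rotation
preserves degrees, this forces `P(ωX) = c P` and `ω Q(ωX) = c Q` for a single constant `c`; comparing
coefficients, the exponents of `P` lie in one residue class `a` mod `n` and those of `Q` in `a - 1`.
Coprimality keeps `X` from dividing both, so either `a = 1`, giving `P = X A(Xⁿ)` and `Q = B(Xⁿ)`
directly, or `a = 0`, where `Q = X^(n-1) B(Xⁿ)` and multiplying `P/Q` through by `X/X` gives the form.
-/

theorem IsCoprime.exists_eq_C_mul_of_mul_eq {K : Type*} [Field K] {P Q P' Q' : K[X]}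
    (hcop : IsCoprime P Q) (hP : P ≠ 0) (hdeg : P'.natDegree ≤ P.natDegree)
    (h : P * Q' = P' * Q) : ∃ c, P' = C c * P ∧ Q' = C c * Q := by
  obtain ⟨u, rfl⟩ : P ∣ P' := hcop.dvd_of_dvd_mul_right ⟨Q', h.symm⟩
  have hu : u.natDegree = 0 := by
    rcases eq_or_ne u 0 with rfl | hu
    · rfl
    · rw [natDegree_mul hP hu] at hdeg
      omega
  rw [eq_C_of_natDegree_eq_zero hu] at h ⊢
  exact ⟨u.coeff 0, mul_comm _ _, mul_left_cancel₀ hP (by rw [h]; ring)⟩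

theorem IsCoprime.coeff_zero_ne_zero_or {R : Type*} [CommRing R] [Nontrivial R] {P Q : R[X]}
    (h : IsCoprime P Q) : P.coeff 0 ≠ 0 ∨ Q.coeff 0 ≠ 0 := by
  obtain ⟨u, v, huv⟩ := h
  by_contra! h0
  simpa [mul_coeff_zero, h0.1, h0.2] using congrArg (coeff · 0) huv

theorem IsCoprime.left_ne_zero_of_pos_natDegree {R : Type*} [CommRing R] [IsDomain R]
    {P Q : R[X]} (h : IsCoprime P Q) (hd : 0 < max P.natDegree Q.natDegree) : P ≠ 0 := by
  rintro rfl
  simp [natDegree_eq_zero_of_isUnit (isCoprime_zero_left.mp h)] at hd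

namespace Polynomial

theorem exists_eq_X_pow_mul_comp_X_pow {R : Type*} [CommSemiring R] {f : R[X]} {n a : ℕ}
    (ha : a < n) (hf : ∀ k, f.coeff k ≠ 0 → k ≡ a [MOD n]) :
    ∃ A : R[X], f = X ^ a * A.comp (X ^ n) := by
  obtain ⟨g, rfl⟩ : X ^ a ∣ f := X_pow_dvd_iff.mpr fun k hk => by
    by_contra h
    have := hf k h
    rw [Nat.ModEq, Nat.mod_eq_of_lt (hk.trans ha), Nat.mod_eq_of_lt ha] at this
    omega
  refine ⟨contract n g, congrArg _ (ext fun k => ?_)⟩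
  rw [← expand_eq_comp_X_pow, coeff_expand (by omega), coeff_contract (by omega)]
  split_ifs with hk
  · rw [Nat.div_mul_cancel hk]
  · by_contra h
    refine hk (Nat.modEq_zero_iff_dvd.mp (Nat.ModEq.add_right_cancel' a ?_))
    simpa using hf (k + a) (by rwa [coeff_X_pow_mul])

theorem mul_pow_eq_of_C_mul_comp_C_mul_X_eq {R : Type*} [CommRing R] [IsDomain R]
    {P : R[X]} {b c ω : R} (h : C b * P.comp (C ω * X) = C c * P) {k : ℕ}
    (hk : P.coeff k ≠ 0) : b * ω ^ k = c := by
  have := congrArg (coeff · k) h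
  simp only [coeff_C_mul, comp_C_mul_X_coeff] at this
  exact mul_right_cancel₀ hk (by rw [← this]; ring)

end Polynomial

theorem moeb_mul_coe (a z : ℂ) : moeb a 0 0 1 z = ((a * z : ℂ) : OnePoint ℂ) := by
  simp [moeb]

theorem moeb_mul_infty (a : ℂ) : moeb a 0 0 1 ∞ = ∞ := by
  simp [moeb]

theorem ratMap_coe (P Q : ℂ[X]) (z : ℂ) :
    ratMap P Q z = if Q.eval z = 0 then ∞ else ((P.eval z / Q.eval z : ℂ) : OnePoint ℂ) :=
  rfl

theorem mul_comp_C_mul_X_eq_of_commute {P Q : ℂ[X]} {ω : ℂ}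
    (h : ∀ p, moeb ω 0 0 1 (ratMap P Q p) = ratMap P Q (moeb ω 0 0 1 p)) :
    P * (C ω * Q.comp (C ω * X)) = P.comp (C ω * X) * Q := by
  refine Polynomial.funext fun z => ?_
  have hz := h z
  simp only [ratMap_coe, moeb_mul_coe] at hz
  simp only [eval_mul, eval_C, eval_comp, eval_X]
  by_cases hQ : Q.eval z = 0 <;> by_cases hQω : Q.eval (ω * z) = 0 <;>
    simp only [hQ, hQω, if_true, if_false, moeb_mul_infty, moeb_mul_coe, coe_eq_coe] at hz
  · simp [hQ, hQω]
  · exact absurd hz (infty_ne_coe _)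
  · exact absurd hz (coe_ne_infty _)
  · field_simp at hz
    linear_combination hz

theorem ratMap_X_mul_X_mul {P Q : ℂ[X]} (hQ : Q.eval 0 = 0) (p : OnePoint ℂ) :
    ratMap (X * P) (X * Q) p = ratMap P Q p := by
  cases p with
  | infty =>
    rcases eq_or_ne Q 0 with rfl | hQ0
    · simp [ratMap, mul_comm X]
    simp only [ratMap, elim_infty, mul_comm X, degree_mul_X, leadingCoeff_mul_X,
      natDegree_mul_X hQ0, coeff_mul_X, WithBot.add_lt_add_iff_right WithBot.one_ne_bot]
  | coe z =>
    rcases eq_or_ne z 0 with rfl | hz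
    · simp [ratMap_coe, hQ]
    · simp [ratMap_coe, hz, mul_div_mul_left]

theorem exists_ratMap_eq_of_modEq {P Q : ℂ[X]} {n : ℕ} (hn : 1 < n) (hcop : IsCoprime P Q)
    (hP : P ≠ 0) (hPP : ∀ i j, P.coeff i ≠ 0 → P.coeff j ≠ 0 → i ≡ j [MOD n])
    (hPQ : ∀ i j, P.coeff i ≠ 0 → Q.coeff j ≠ 0 → i ≡ j + 1 [MOD n]) :
    ∃ A B : ℂ[X], ∀ p, ratMap P Q p = ratMap (X * A.comp (X ^ n)) (B.comp (X ^ n)) p := by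
  rcases ne_or_eq (Q.coeff 0) 0 with hQ0 | hQ0
  · have hlead : P.coeff P.natDegree ≠ 0 := leadingCoeff_ne_zero.mpr hP
    obtain ⟨A, hA⟩ := exists_eq_X_pow_mul_comp_X_pow hn fun i hi => hPQ i 0 hi hQ0
    obtain ⟨B, hB⟩ := exists_eq_X_pow_mul_comp_X_pow (a := 0) (by omega) fun j hj =>
      Nat.ModEq.add_right_cancel' 1 ((hPQ _ j hlead hj).symm.trans (hPQ _ 0 hlead hQ0))
    exact ⟨A, B, fun p => by rw [hA, hB, pow_one, pow_zero, one_mul]⟩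
  · have hP0 := hcop.coeff_zero_ne_zero_or.resolve_right (not_not.mpr hQ0)
    have hn1 : n - 1 + 1 = n := Nat.sub_add_cancel hn.le
    obtain ⟨A, hA⟩ := exists_eq_X_pow_mul_comp_X_pow (a := 0) (by omega) fun i hi =>
      hPP i 0 hi hP0
    obtain ⟨B, hB⟩ := exists_eq_X_pow_mul_comp_X_pow (a := n - 1) (by omega) fun j hj =>
      Nat.ModEq.add_right_cancel' 1 <| (hPQ 0 j hP0 hj).symm.trans <| by
        rw [hn1]; exact (Nat.modEq_zero_iff_dvd.mpr dvd_rfl).symm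
    have hXQ : (X * B).comp (X ^ n) = X * Q := by
      rw [hB, mul_comp, X_comp, ← mul_assoc, ← pow_succ', hn1]
    refine ⟨A, X * B, fun p => ?_⟩
    rw [hXQ, ratMap_X_mul_X_mul (by rwa [← coeff_zero_eq_eval_zero]), hA, pow_zero, one_mul]

/-- a rational map of degree `d ≥ 2` commuting with the rotation
`T(z) = e^{2πi/n} z` (`n ≥ 2`) has the form `φ(z) = z ψ(z^n)`. -/
theorem form_of_rotation_symmetric_map
    (n d : ℕ) (hn : 2 ≤ n) (hd : 2 ≤ d) (P Q : Polynomial ℂ)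
    (hcop : IsCoprime P Q) (hdeg : max P.natDegree Q.natDegree = d)
    (hcomm : ∀ p, moeb (Complex.exp (2 * Real.pi * Complex.I / n)) 0 0 1 (ratMap P Q p)
        = ratMap P Q (moeb (Complex.exp (2 * Real.pi * Complex.I / n)) 0 0 1 p)) :
    ∃ A B : Polynomial ℂ,
      ∀ p, ratMap P Q p = ratMap (X * A.comp (X ^ n)) (B.comp (X ^ n)) p := by
  set ω : ℂ := Complex.exp (2 * Real.pi * Complex.I / n)
  have hω : IsPrimitiveRoot ω n := Complex.isPrimitiveRoot_exp n (by omega)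
  have hP : P ≠ 0 := hcop.left_ne_zero_of_pos_natDegree (by omega)
  obtain ⟨c, hPc, hQc⟩ := hcop.exists_eq_C_mul_of_mul_eq hP
    (by rw [natDegree_comp, natDegree_C_mul_X _ (hω.ne_zero (by omega)), mul_one])
    (mul_comp_C_mul_X_eq_of_commute hcomm)
  have hPpow : ∀ i, P.coeff i ≠ 0 → ω ^ i = c := fun i hi => by
    simpa using mul_pow_eq_of_C_mul_comp_C_mul_X_eq (b := 1) (by rw [C_1, one_mul, hPc]) hi
  have hQpow : ∀ j, Q.coeff j ≠ 0 → ω ^ (j + 1) = c := fun j hj => by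
    rw [pow_succ']
    exact mul_pow_eq_of_C_mul_comp_C_mul_X_eq hQc hj
  have hmod : ∀ i j, ω ^ i = ω ^ j → i ≡ j [MOD n] := fun i j h => by
    rwa [hω.eq_orderOf, ← (hω.isOfFinOrder (by omega)).pow_eq_pow_iff_modEq]
  exact exists_ratMap_eq_of_modEq (by omega) hcop hP
    (fun i j hi hj => hmod i j ((hPpow i hi).trans (hPpow j hj).symm))
    (fun i j hi hj => hmod i (j + 1) ((hPpow i hi).trans (hQpow j hj).symm))
end
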